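/- arXiv:1703.00609 — 4 statements merged into one kernel-verified Lean document; each statement's English description precedes it below -/
import Mathlib

section
/- For even d ≥ 2, any t ∈ F_q and m ∈ F_q^d, the normalized Fourier transform of the sphere S_t = {x ∈ F_q^d : x_1^2+...+x_d^2 = t} satisfies Ŝ_t(m) = q^{-1} δ_0(m) + q^{-d-1} G^d ∑_{ℓ∈F_q^*} χ(tℓ + ‖m‖/(4ℓ)), where δ_0(m) = 1 if m = 0 and 0 otherwise, ‖m‖ = m_1^2+...+m_d^2, and G = ∑_{s∈F_q^*} η(s)χ(s) is the Gauss sum with η the quadratic character of F_q. -/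
open Finset

/-!
Detect the sphere by orthogonality: `q · 1[‖x‖ = t] = ∑_ℓ χ(ℓ (t - ‖x‖))`. The term `ℓ = 0` gives
`q^d δ₀(m)`. For `ℓ ≠ 0` the sum over `x` factors into `d` one-variable quadratic sums, each equal to
`χ(m_i² / (4ℓ)) η(-ℓ) G` by completing the square, and `η(-ℓ)^d = 1` because `d` is even.
-/

namespace AddChar

variable {A M : Type*} [AddCommMonoid A]

lemma map_sum_eq_prod [CommMonoid M] {ι : Type*} (ψ : AddChar A M) (s : Finset ι) (f : ι → A) :
    ψ (∑ i ∈ s, f i) = ∏ i ∈ s, ψ (f i) := by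
  induction s using Finset.cons_induction with
  | empty => simp
  | cons a s ha ih => rw [sum_cons, prod_cons, map_add_eq_mul, ih]

lemma sum_pi_map_sum [CommSemiring M] [Fintype A] {ι : Type*} [Fintype ι] [DecidableEq ι]
    (ψ : AddChar A M) (f : ι → A → A) :
    ∑ x : ι → A, ψ (∑ i, f i (x i)) = ∏ i, ∑ a, ψ (f i a) := by
  simp_rw [map_sum_eq_prod]
  exact (Fintype.prod_sum fun i a => ψ (f i a)).symm

end AddChar

lemma quadraticChar_cast_sq {F R : Type*} [Field F] [Fintype F] [DecidableEq F] [Ring R]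
    {a : F} (ha : a ≠ 0) : (quadraticChar F a : R) ^ 2 = 1 := by
  rw [← Int.cast_pow, quadraticChar_sq_one ha, Int.cast_one]

section FiniteField

variable {F R : Type*} [Field F] [Fintype F] [DecidableEq F] [CommRing R] [IsDomain R]
  {χ : AddChar F R}

lemma sum_addChar_mul_sq (hF : ringChar F ≠ 2) (hχ : χ ≠ 1) {a : F} (ha : a ≠ 0) :
    ∑ u : F, χ (a * u ^ 2) = quadraticChar F a * ∑ s : F, quadraticChar F s * χ s := by
  have fiber_card (v : F) : (#{u : F | u ^ 2 = v} : R) = quadraticChar F v + 1 := by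
    have h := quadraticChar_card_sqrts hF v
    rw [Set.toFinset_ofPred] at h
    exact_mod_cast congrArg (Int.cast : ℤ → R) h
  have twisted : ∑ v : F, quadraticChar F v * χ (a * v)
      = quadraticChar F a * ∑ s : F, quadraticChar F s * χ s := by
    have := gaussSum_mulShift ((quadraticChar F).ringHomComp (Int.castRingHom R)) χ
      (Units.mk0 a ha)
    simp only [gaussSum, MulChar.ringHomComp_apply, AddChar.mulShift_apply, Units.val_mk0,
      eq_intCast] at this
    rw [← this, ← mul_assoc, ← sq, quadraticChar_cast_sq ha, one_mul]
  calc ∑ u : F, χ (a * u ^ 2)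
      = ∑ v : F, (#{u : F | u ^ 2 = v} : R) * χ (a * v) := by
        rw [← sum_fiberwise' univ (· ^ 2) (fun v => χ (a * v))]
        simp [sum_const]
    _ = ∑ v : F, quadraticChar F v * χ (a * v) + ∑ v : F, χ (v * a) := by
        simp_rw [fiber_card, add_mul, one_mul, mul_comm a, sum_add_distrib]
    _ = _ := by
        rw [AddChar.sum_mulShift a (.of_ne_one hχ), if_neg ha, Nat.cast_zero, add_zero, twisted]

lemma sum_addChar_quadratic (hF : ringChar F ≠ 2) (hχ : χ ≠ 1) {a : F} (ha : a ≠ 0) (c : F) :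
    ∑ s : F, χ (a * s ^ 2 - c * s)
      = χ (-(c ^ 2 / (4 * a))) * (quadraticChar F a * ∑ s : F, quadraticChar F s * χ s) := by
  have h2 : (2 : F) ≠ 0 := Ring.two_ne_zero hF
  have h4 : (4 : F) ≠ 0 := by simpa [show (4 : F) = 2 ^ 2 by norm_num] using pow_ne_zero 2 h2
  have complete_sq (u : F) : a * (u + c / (2 * a)) ^ 2 - c * (u + c / (2 * a))
      = -(c ^ 2 / (4 * a)) + a * u ^ 2 := by
    field_simp
    ring
  rw [← sum_addChar_mul_sq hF hχ ha, mul_sum,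
    ← Equiv.sum_comp (Equiv.addRight (c / (2 * a))) (fun s => χ (a * s ^ 2 - c * s))]
  simp only [Equiv.coe_addRight, complete_sq, AddChar.map_add_eq_mul]

lemma sum_pi_addChar_quadratic {ι : Type*} [Fintype ι] [DecidableEq ι] (hF : ringChar F ≠ 2)
    (hχ : χ ≠ 1) {a : F} (ha : a ≠ 0) (m : ι → F) :
    ∑ x : ι → F, χ (a * ∑ i, x i ^ 2 - ∑ i, x i * m i)
      = χ (-((∑ i, m i ^ 2) / (4 * a)))
        * (quadraticChar F a * ∑ s : F, quadraticChar F s * χ s) ^ Fintype.card ι := by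
  have split (x : ι → F) :
      a * ∑ i, x i ^ 2 - ∑ i, x i * m i = ∑ i, (a * x i ^ 2 - m i * x i) := by
    rw [mul_sum, ← sum_sub_distrib]
    exact sum_congr rfl fun i _ => by ring
  simp_rw [split, χ.sum_pi_map_sum fun i s => a * s ^ 2 - m i * s,
    sum_addChar_quadratic hF hχ ha, prod_mul_distrib, prod_const, card_univ,
    ← AddChar.map_sum_eq_prod]
  rw [sum_neg_distrib, ← sum_div, mul_pow]

lemma sum_pi_addChar_dotProduct {ι : Type*} [Fintype ι] [DecidableEq ι] (hχ : χ ≠ 1)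
    (m : ι → F) :
    ∑ x : ι → F, χ (-∑ i, x i * m i)
      = if m = 0 then (Fintype.card F : R) ^ Fintype.card ι else 0 := by
  simp_rw [← sum_neg_distrib, ← mul_neg, χ.sum_pi_map_sum fun i s => s * -m i,
    AddChar.sum_mulShift _ (.of_ne_one hχ), neg_eq_zero]
  by_cases hm : m = 0
  · simp [hm]
  · obtain ⟨i, hi⟩ := Function.ne_iff.mp hm
    rw [if_neg hm]
    exact prod_eq_zero (mem_univ i) (by simp [show m i ≠ 0 from hi])

lemma card_mul_sum_filter_eq {X : Type*} [Fintype X] (hχ : χ ≠ 1) (N : X → F) (t : F)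
    (f : X → R) :
    (Fintype.card F : R) * ∑ x ∈ univ.filter (fun x => N x = t), f x
      = ∑ ℓ : F, ∑ x, χ (ℓ * (t - N x)) * f x := by
  simp_rw [sum_comm (γ := F), ← sum_mul, AddChar.sum_mulShift _ (.of_ne_one hχ), sub_eq_zero,
    sum_filter, mul_sum, eq_comm (a := t)]
  refine sum_congr rfl fun x _ => ?_
  split_ifs <;> simp

lemma card_mul_sum_sphere {ι : Type*} [Fintype ι] [DecidableEq ι] (hF : ringChar F ≠ 2)
    (hχ : χ ≠ 1) (hι : Even (Fintype.card ι)) (t : F) (m : ι → F) :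
    (Fintype.card F : R) * ∑ x ∈ univ.filter (fun x : ι → F => ∑ i, x i ^ 2 = t),
        χ (-∑ i, x i * m i)
      = (if m = 0 then (Fintype.card F : R) ^ Fintype.card ι else 0)
        + (∑ s : F, quadraticChar F s * χ s) ^ Fintype.card ι
          * ∑ ℓ ∈ univ.filter (fun ℓ : F => ℓ ≠ 0), χ (t * ℓ + (∑ i, m i ^ 2) / (4 * ℓ)) := by
  have phase_split (ℓ : F) :
      ∑ x : ι → F, χ (ℓ * (t - ∑ i, x i ^ 2)) * χ (-∑ i, x i * m i)
        = χ (t * ℓ) * ∑ x : ι → F, χ (-ℓ * ∑ i, x i ^ 2 - ∑ i, x i * m i) := by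
    rw [mul_sum]
    refine sum_congr rfl fun x _ => ?_
    rw [← AddChar.map_add_eq_mul, ← AddChar.map_add_eq_mul]
    congr 1
    ring
  rw [card_mul_sum_filter_eq hχ, ← add_sum_erase _ _ (mem_univ 0), filter_ne' univ 0, mul_sum]
  simp_rw [phase_split]
  congr 1
  · simp [sum_pi_addChar_dotProduct hχ]
  · refine sum_congr rfl fun ℓ hℓ => ?_
    have hℓ : -ℓ ≠ 0 := neg_ne_zero.mpr (ne_of_mem_erase hℓ)
    obtain ⟨k, hk⟩ := hι
    rw [sum_pi_addChar_quadratic hF hχ hℓ, mul_pow, hk, ← two_mul, pow_mul,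
      quadraticChar_cast_sq hℓ, one_pow, one_mul, ← mul_assoc, ← AddChar.map_add_eq_mul, mul_comm]
    congr 2
    rw [mul_neg, div_neg, neg_neg]

end FiniteField

theorem stmt3_general {F : Type*} [Field F] [Fintype F] [DecidableEq F] (hchar : ringChar F ≠ 2)
    (d : ℕ) (hde : Even d)
    (χ : AddChar F ℂ) (hχ : χ ≠ 1) (t : F) (m : Fin d → F) :
    (∑ x ∈ Finset.univ.filter (fun x : Fin d → F => ∑ i, x i ^ 2 = t),
        χ (-(∑ i, x i * m i))) / (Fintype.card F : ℂ) ^ d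
      = (if m = 0 then 1 else 0) / (Fintype.card F : ℂ)
        + ((∑ s : F, ((quadraticChar F s : ℤ) : ℂ) * χ s) ^ d / (Fintype.card F : ℂ) ^ (d + 1)) *
          ∑ ℓ ∈ Finset.univ.filter (fun ℓ : F => ℓ ≠ 0),
            χ (t * ℓ + (∑ i, m i ^ 2) / (4 * ℓ)) := by
  have hq : (Fintype.card F : ℂ) ≠ 0 := Nat.cast_ne_zero.mpr Fintype.card_ne_zero
  have key := card_mul_sum_sphere hchar hχ (by rwa [Fintype.card_fin]) t m
  rw [Fintype.card_fin] at key
  rw [← mul_div_mul_left _ _ hq, ← pow_succ', key, add_div, mul_div_right_comm]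
  congr 1
  split_ifs
  · rw [pow_succ, div_mul_cancel_left₀ (pow_ne_zero d hq), one_div]
  · simp

/-- Explicit formula for the normalized Fourier transform of the sphere `S_t` in even
dimension `d`:
`Ŝ_t(m) = q^{-1} δ₀(m) + q^{-d-1} G^d ∑_{ℓ≠0} χ(tℓ + ‖m‖/(4ℓ))`,
where `G` is the Gauss sum associated with the quadratic character. -/
theorem stmt3 {F : Type*} [Field F] [Fintype F] [DecidableEq F] (hchar : ringChar F ≠ 2)
    (d : ℕ) (hd : 2 ≤ d) (hde : Even d)
    (χ : AddChar F ℂ) (hχ : χ ≠ 1) (t : F) (m : Fin d → F) :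
    (∑ x ∈ Finset.univ.filter (fun x : Fin d → F => ∑ i, x i ^ 2 = t),
        χ (-(∑ i, x i * m i))) / (Fintype.card F : ℂ) ^ d
      = (if m = 0 then 1 else 0) / (Fintype.card F : ℂ)
        + ((∑ s : F, ((quadraticChar F s : ℤ) : ℂ) * χ s) ^ d / (Fintype.card F : ℂ) ^ (d + 1)) *
          ∑ ℓ ∈ Finset.univ.filter (fun ℓ : F => ℓ ≠ 0),
            χ (t * ℓ + (∑ i, m i ^ 2) / (4 * ℓ)) :=
  stmt3_general hchar d hde χ hχ t m
end

section
/- For any m, v ∈ F_q^d, ∑_{t∈F_q} Ŝ_t(m) · conj(Ŝ_t(v)) = q^{-1} δ_0(m) δ_0(v) + q^{-d-1} ∑_{s∈F_q^*} χ(s(‖m‖ − ‖v‖)), where Ŝ_t is the normalized Fourier transform of the indicator of the sphere S_t = {x ∈ F_q^d : ‖x‖ = t}. -/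
/-!
Writing the indicator of `‖x‖ = ‖y‖` as `q⁻¹ ∑ₛ χ(s(‖x‖ - ‖y‖))` turns the left-hand side
into `q^(-2d-1) ∑ₛ G(s, -m) G(-s, v)`, where `G(s, w) = ∑ₓ χ(s‖x‖ + x·w)` is a quadratic
Gauss sum. For `s = 0` the product is `q^(2d) δ₀(m) δ₀(v)`. For `s ≠ 0`, substituting
`y = x + u` in the double sum makes the sum over `x` a complete linear character sum, which
vanishes unless `u = (2s)⁻¹(v - m)`; this gives `q^d χ((‖v‖ - ‖m‖)/(4s))`, and the
substitution `s ↦ -1/(4s)` on `F^*` yields the claimed sum.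
-/

open Finset Matrix

section

variable {F : Type*} [Field F] [Fintype F] [DecidableEq F] {ψ : AddChar F ℂ}

lemma AddChar.sum_dotProduct_eq_ite {ι : Type*} [Fintype ι] [DecidableEq ι] (hψ : ψ ≠ 1)
    (w : ι → F) :
    ∑ x : ι → F, ψ (x ⬝ᵥ w) = if w = 0 then (Fintype.card F : ℂ) ^ Fintype.card ι else 0 := by
  split_ifs with hw
  · simp [hw, Fintype.card_pi]
  obtain ⟨i, hi⟩ := Function.ne_iff.mp hw
  obtain ⟨a, ha⟩ := AddChar.ne_one_iff.mp hψ
  let φ : AddChar (ι → F) ℂ :=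
    ψ.compAddMonoidHom (AddMonoidHom.mk' (· ⬝ᵥ w) fun x y => add_dotProduct x y w)
  refine AddChar.sum_eq_zero_of_ne_one (ψ := φ)
    (AddChar.ne_one_iff.mpr ⟨Pi.single i (a / w i), ?_⟩)
  simpa [φ, single_dotProduct, div_mul_cancel₀ _ hi] using ha

lemma sum_fiber_mul_sum_fiber {α : Type*} [Fintype α] (hψ : ψ ≠ 1) (N : α → F) (f g : α → ℂ) :
    ∑ t, (∑ x ∈ univ.filter (fun x => N x = t), f x) *
        (∑ y ∈ univ.filter (fun y => N y = t), g y) =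
      (∑ s, (∑ x, ψ (s * N x) * f x) * ∑ y, ψ (-s * N y) * g y) / Fintype.card F := by
  have hq : (Fintype.card F : ℂ) ≠ 0 := by simp
  have orth : ∀ x y, ∑ s, ψ (s * N x) * ψ (-s * N y) =
      if N x = N y then (Fintype.card F : ℂ) else 0 := by
    intro x y
    simp_rw [← AddChar.map_add_eq_mul, neg_mul, ← sub_eq_add_neg, ← mul_sub]
    simpa [sub_eq_zero] using
      AddChar.sum_mulShift (N x - N y) (AddChar.IsPrimitive.of_ne_one hψ)
  rw [eq_div_iff hq]
  have fibers : ∑ t, (∑ x ∈ univ.filter (fun x => N x = t), f x) *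
      (∑ y ∈ univ.filter (fun y => N y = t), g y) =
        ∑ x, ∑ y, if N x = N y then f x * g y else 0 := by
    simp_rw [sum_filter, sum_mul_sum]
    rw [sum_comm]
    refine sum_congr rfl fun x _ => ?_
    rw [sum_comm]
    refine sum_congr rfl fun y _ => ?_
    simp [ite_mul, mul_ite, sum_ite_eq]
  rw [fibers, sum_mul]
  simp_rw [sum_mul_sum, sum_mul]
  conv_rhs => rw [sum_comm]
  refine sum_congr rfl fun x _ => ?_
  conv_rhs => rw [sum_comm]
  refine sum_congr rfl fun y _ => ?_
  simp_rw [mul_mul_mul_comm _ (f x), ← sum_mul, orth]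
  split_ifs <;> simp [mul_comm]

lemma sum_filter_ne_zero_comp_div_left {M : Type*} [AddCommMonoid M] (f : F → M) {c : F}
    (hc : c ≠ 0) :
    ∑ s ∈ univ.filter (· ≠ 0), f (c / s) = ∑ s ∈ univ.filter (· ≠ 0), f s := by
  refine sum_nbij' (c / ·) (c / ·) ?_ ?_ ?_ ?_ fun _ _ => rfl <;>
    simp +contextual [hc, div_div_cancel₀]

section QuadraticGaussSum

variable {ι : Type*} [Fintype ι] [DecidableEq ι]

variable (ψ) in
def quadraticGaussSum (s : F) (w : ι → F) : ℂ :=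
  ∑ x, ψ (s * (x ⬝ᵥ x) + x ⬝ᵥ w)

lemma quadraticGaussSum_zero_left (hψ : ψ ≠ 1) (w : ι → F) :
    quadraticGaussSum ψ 0 w = if w = 0 then (Fintype.card F : ℂ) ^ Fintype.card ι else 0 := by
  simpa [quadraticGaussSum] using AddChar.sum_dotProduct_eq_ite hψ w

lemma quadraticGaussSum_mul_quadraticGaussSum_neg (hψ : ψ ≠ 1) (h2 : (2 : F) ≠ 0) {s : F}
    (hs : s ≠ 0) (w w' : ι → F) :
    quadraticGaussSum ψ s w * quadraticGaussSum ψ (-s) w' =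
      (Fintype.card F : ℂ) ^ Fintype.card ι * ψ ((w' ⬝ᵥ w' - w ⬝ᵥ w) / (4 * s)) := by
  have shift : ∀ x u : ι → F,
      s * (x ⬝ᵥ x) + x ⬝ᵥ w + (-s * ((x + u) ⬝ᵥ (x + u)) + (x + u) ⬝ᵥ w') =
        x ⬝ᵥ (w + w' - (2 * s) • u) + (u ⬝ᵥ w' - s * (u ⬝ᵥ u)) := by
    intro x u
    simp only [add_dotProduct, dotProduct_add, dotProduct_sub, dotProduct_smul, smul_eq_mul,
      dotProduct_comm u x]
    ring
  set u₀ : ι → F := (2 * s)⁻¹ • (w + w')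
  have hu₀ : ∀ u, w + w' - (2 * s) • u = 0 ↔ u = u₀ := fun u => by
    rw [sub_eq_zero, eq_comm, eq_inv_smul_iff₀ (mul_ne_zero h2 hs)]
  have h4 : (4 : F) ≠ 0 := by
    simpa [show (2 : F) ^ 2 = 4 by norm_num] using pow_ne_zero 2 h2
  have value : u₀ ⬝ᵥ w' - s * (u₀ ⬝ᵥ u₀) = (w' ⬝ᵥ w' - w ⬝ᵥ w) / (4 * s) := by
    simp only [u₀, smul_dotProduct, dotProduct_smul, add_dotProduct, dotProduct_add, smul_eq_mul,
      dotProduct_comm w' w]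
    field_simp
    ring
  calc quadraticGaussSum ψ s w * quadraticGaussSum ψ (-s) w'
      = ∑ x, ∑ u, ψ (x ⬝ᵥ (w + w' - (2 * s) • u)) * ψ (u ⬝ᵥ w' - s * (u ⬝ᵥ u)) := by
        rw [quadraticGaussSum, quadraticGaussSum, sum_mul_sum]
        refine sum_congr rfl fun x _ => ?_
        rw [← Equiv.sum_comp (Equiv.addLeft x)]
        simp only [Equiv.coe_addLeft, ← AddChar.map_add_eq_mul, shift]
    _ = ∑ u, (if u = u₀ then (Fintype.card F : ℂ) ^ Fintype.card ι else 0) *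
          ψ (u ⬝ᵥ w' - s * (u ⬝ᵥ u)) := by
        rw [sum_comm]
        simp only [← sum_mul, AddChar.sum_dotProduct_eq_ite hψ, hu₀]
    _ = _ := by simp [value]

lemma sum_quadraticGaussSum_mul_quadraticGaussSum_neg (hψ : ψ ≠ 1) (h2 : (2 : F) ≠ 0)
    (w w' : ι → F) :
    ∑ s ∈ univ.filter (· ≠ 0), quadraticGaussSum ψ s w * quadraticGaussSum ψ (-s) w' =
      (Fintype.card F : ℂ) ^ Fintype.card ι *
        ∑ s ∈ univ.filter (· ≠ 0), ψ (s * (w ⬝ᵥ w - w' ⬝ᵥ w')) := by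
  have h4 : (4 : F) ≠ 0 := by
    simpa [show (2 : F) ^ 2 = 4 by norm_num] using pow_ne_zero 2 h2
  rw [sum_congr rfl fun s hs => quadraticGaussSum_mul_quadraticGaussSum_neg hψ h2
      (mem_filter.1 hs).2 w w', ← mul_sum,
    ← sum_filter_ne_zero_comp_div_left _ (neg_ne_zero.2 (inv_ne_zero h4))]
  congr 1
  refine sum_congr rfl fun s hs => ?_
  have hs0 : s ≠ 0 := (mem_filter.1 hs).2
  congr 1
  field_simp
  ring

end QuadraticGaussSum

end

theorem stmt4_general {F : Type*} [Field F] [Fintype F] [DecidableEq F] (hchar : ringChar F ≠ 2)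
    (d : ℕ) (χ : AddChar F ℂ) (hχ : χ ≠ 1) (m v : Fin d → F) :
    ∑ t : F,
        ((∑ x ∈ Finset.univ.filter (fun x : Fin d → F => ∑ i, x i ^ 2 = t),
            χ (-(∑ i, x i * m i))) / (Fintype.card F : ℂ) ^ d) *
        (starRingEnd ℂ)
          ((∑ x ∈ Finset.univ.filter (fun x : Fin d → F => ∑ i, x i ^ 2 = t),
            χ (-(∑ i, x i * v i))) / (Fintype.card F : ℂ) ^ d)
      = (if m = 0 then 1 else 0) * (if v = 0 then 1 else 0) / (Fintype.card F : ℂ)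
        + (∑ s ∈ Finset.univ.filter (fun s : F => s ≠ 0),
            χ (s * ((∑ i, m i ^ 2) - ∑ i, v i ^ 2))) / (Fintype.card F : ℂ) ^ (d + 1) := by
  have hnorm : ∀ x : Fin d → F, ∑ i, x i ^ 2 = x ⬝ᵥ x := fun x => by simp [dotProduct, sq]
  set G := quadraticGaussSum χ (ι := Fin d) with hG
  calc _ = (∑ t, (∑ x ∈ univ.filter (fun x : Fin d → F => x ⬝ᵥ x = t), χ (-(x ⬝ᵥ m))) *
          ∑ y ∈ univ.filter (fun y : Fin d → F => y ⬝ᵥ y = t), χ (y ⬝ᵥ v)) /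
            (Fintype.card F : ℂ) ^ (2 * d) := by
        simp_rw [hnorm, map_div₀, map_sum, ← AddChar.map_neg_eq_conj, neg_neg, map_pow,
          map_natCast, div_mul_div_comm, ← sum_div, ← pow_add, two_mul]
        rfl
    _ = (∑ s, G s (-m) * G (-s) v) / (Fintype.card F : ℂ) ^ (2 * d + 1) := by
        rw [sum_fiber_mul_sum_fiber hχ]
        simp [hG, quadraticGaussSum, AddChar.map_add_eq_mul, div_div, pow_succ']
    _ = (G 0 (-m) * G 0 v + ∑ s ∈ univ.filter (· ≠ 0), G s (-m) * G (-s) v) /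
          (Fintype.card F : ℂ) ^ (2 * d + 1) := by
        rw [filter_ne', ← add_sum_erase _ _ (mem_univ 0), neg_zero]
    _ = _ := by
        rw [hG, quadraticGaussSum_zero_left hχ, quadraticGaussSum_zero_left hχ,
          sum_quadraticGaussSum_mul_quadraticGaussSum_neg hχ (Ring.two_ne_zero hchar),
          hnorm, hnorm]
        simp only [neg_eq_zero, neg_dotProduct_neg, Fintype.card_fin]
        generalize ∑ s ∈ univ.filter (· ≠ 0), χ (s * (m ⬝ᵥ m - v ⬝ᵥ v)) = S
        split_ifs <;> field_simp <;> ring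

/-- Lemma 2.3: for any `m, v ∈ F_q^d`,
`∑_t Ŝ_t(m) conj(Ŝ_t(v)) = q^{-1} δ₀(m) δ₀(v) + q^{-d-1} ∑_{s≠0} χ(s(‖m‖-‖v‖))`. -/
theorem stmt4 {F : Type*} [Field F] [Fintype F] [DecidableEq F] (hchar : ringChar F ≠ 2)
    (d : ℕ) (hd : 1 ≤ d) (χ : AddChar F ℂ) (hχ : χ ≠ 1) (m v : Fin d → F) :
    ∑ t : F,
        ((∑ x ∈ Finset.univ.filter (fun x : Fin d → F => ∑ i, x i ^ 2 = t),
            χ (-(∑ i, x i * m i))) / (Fintype.card F : ℂ) ^ d) *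
        (starRingEnd ℂ)
          ((∑ x ∈ Finset.univ.filter (fun x : Fin d → F => ∑ i, x i ^ 2 = t),
            χ (-(∑ i, x i * v i))) / (Fintype.card F : ℂ) ^ d)
      = (if m = 0 then 1 else 0) * (if v = 0 then 1 else 0) / (Fintype.card F : ℂ)
        + (∑ s ∈ Finset.univ.filter (fun s : F => s ≠ 0),
            χ (s * ((∑ i, m i ^ 2) - ∑ i, v i ^ 2))) / (Fintype.card F : ℂ) ^ (d + 1) :=
  stmt4_general hchar d χ hχ m v
end

section
/- Second moment bound: for E_1,...,E_k ⊂ F_q^d with d, k ≥ 2, the counting function ν_k(t) = |{(x^1,...,x^k) ∈ E_1×...×E_k : ‖x^1+...+x^k‖ = t}| satisfies ∑_{t∈F_q} ν_k(t)^2 ≤ q^{-1}(∏_{j=1}^k |E_j|)^2 + q^{2dk−d} ∑_{r∈F_q} |∑_{v∈S_r} ∏_{j=1}^k Ê_j(v)|^2. -/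
/-!
Parseval turns `q ∑ₜ ν(t)²` into `∑ₐ |ν̂(a)|²` with `ν̂(a) = ∑ₓ χ(a ‖x¹ + ⋯ + xᵏ‖)`; the term
`a = 0` is `(∏ⱼ |Eⱼ|)²`. For `a ≠ 0`, completing the square expands the quadratic phase as
`q^d χ(a ‖w‖) = G(a)^d ∑ₘ χ(-w·m) χ(-‖m‖ / 4a)`, where the Gauss sum `G(a) = ∑ᵤ χ(a u²)` has
`|G(a)|² = q`. Summing over `x` and grouping `m` by `‖m‖` identifies `ν̂(a)`, up to the factor
`G(a)^d / q^d`, with the transform at `-1/4a` of `r ↦ ∑_{v ∈ S_r} ∏ⱼ Êⱼ(v)`. As `a ↦ -1/4a` is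
injective, a second use of Parseval bounds the terms `a ≠ 0`.
-/

open Finset ComplexConjugate

lemma AddChar.map_sum_eq_prod_s7 {A M ι : Type*} [AddCommMonoid A] [CommMonoid M]
    (ψ : AddChar A M) (s : Finset ι) (f : ι → A) : ψ (∑ i ∈ s, f i) = ∏ i ∈ s, ψ (f i) := by
  classical
  induction s using Finset.induction_on with
  | empty => simp
  | insert a s ha ih => rw [sum_insert ha, prod_insert ha, map_add_eq_mul, ih]

lemma AddChar.sum_piFinset_map_neg_sum_dotProduct {R M ι κ : Type*} [CommRing R] [CommSemiring M]
    [Fintype ι] [Fintype κ] [DecidableEq κ] (ψ : AddChar R M) (E : κ → Finset (ι → R))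
    (m : ι → R) :
    ∑ x ∈ Fintype.piFinset E, ψ (-((∑ j, x j) ⬝ᵥ m)) = ∏ j, ∑ y ∈ E j, ψ (-(y ⬝ᵥ m)) := by
  rw [prod_univ_sum]
  simp_rw [sum_dotProduct, ← sum_neg_distrib, AddChar.map_sum_eq_prod_s7]

section FiniteField

variable {F : Type*} [Field F] [Fintype F] {χ : AddChar F ℂ}

local notation "q" => (Fintype.card F : ℂ)

theorem sum_addChar_mul_sq_add_mul (h2 : (2 : F) ≠ 0) {a : F} (ha : a ≠ 0) (c : F) :
    ∑ u, χ (a * u ^ 2 + c * u) = χ (-(4 * a)⁻¹ * c ^ 2) * ∑ u, χ (a * u ^ 2) := by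
  rw [mul_sum]
  refine (Fintype.sum_equiv (Equiv.subRight (c / (2 * a))) _ _ fun v => ?_).symm
  rw [← AddChar.map_add_eq_mul, Equiv.subRight_apply]
  have h4 : (4 : F) ≠ 0 := by simpa [show (4 : F) = 2 ^ 2 by norm_num] using pow_ne_zero 2 h2
  congr 1
  field_simp
  ring

variable {ι : Type*} [Fintype ι] [DecidableEq ι]

theorem sum_addChar_mul_sumSq_add_dotProduct (h2 : (2 : F) ≠ 0) {a : F} (ha : a ≠ 0) (m : ι → F) :
    ∑ s : ι → F, χ (a * ∑ i, s i ^ 2 + s ⬝ᵥ m)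
      = χ (-(4 * a)⁻¹ * ∑ i, m i ^ 2) * (∑ u, χ (a * u ^ 2)) ^ Fintype.card ι := by
  have split : ∀ s : ι → F, a * ∑ i, s i ^ 2 + s ⬝ᵥ m = ∑ i, (a * s i ^ 2 + m i * s i) :=
    fun s => by simp only [dotProduct, mul_sum, sum_add_distrib, mul_comm (s _)]
  simp_rw [split, AddChar.map_sum_eq_prod_s7]
  rw [← Fintype.prod_sum (fun i u => χ (a * u ^ 2 + m i * u))]
  simp_rw [sum_addChar_mul_sq_add_mul h2 ha, prod_mul_distrib, prod_const, card_univ,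
    ← AddChar.map_sum_eq_prod_s7, mul_sum]

variable [DecidableEq F]

lemma sum_addChar_mul_eq_ite (hχ : χ ≠ 1) (x : F) :
    ∑ a, χ (a * x) = if x = 0 then q else 0 := by
  rw [AddChar.sum_mulShift x (AddChar.IsPrimitive.of_ne_one hχ)]
  push_cast
  rfl

lemma sum_addChar_dotProduct_eq_ite (hχ : χ ≠ 1) (v : ι → F) :
    ∑ m, χ (v ⬝ᵥ m) = if v = 0 then q ^ Fintype.card ι else 0 := by
  unfold dotProduct
  simp_rw [AddChar.map_sum_eq_prod_s7]
  rw [← Fintype.prod_sum (fun i u => χ (v i * u))]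
  simp_rw [mul_comm (v _), sum_addChar_mul_eq_ite hχ, Fintype.prod_ite_zero, funext_iff,
    prod_const, card_univ, Pi.zero_apply]

def addCharTransform (χ : AddChar F ℂ) (f : F → ℂ) (a : F) : ℂ := ∑ t, χ (a * t) * f t

theorem sum_norm_sq_addCharTransform (hχ : χ ≠ 1) (f : F → ℂ) :
    ∑ a, ‖addCharTransform χ f a‖ ^ 2 = Fintype.card F * ∑ t, ‖f t‖ ^ 2 := by
  apply Complex.ofReal_injective
  push_cast
  simp_rw [← Complex.mul_conj']
  have expand : ∀ a, addCharTransform χ f a * conj (addCharTransform χ f a)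
      = ∑ t, ∑ s, χ (a * (t - s)) * (f t * conj (f s)) := fun a => by
    rw [addCharTransform, map_sum, sum_mul_sum]
    refine sum_congr rfl fun t _ => sum_congr rfl fun s _ => ?_
    rw [map_mul (starRingEnd ℂ), ← AddChar.map_neg_eq_conj, mul_sub, sub_eq_add_neg, ← mul_neg,
      AddChar.map_add_eq_mul]
    ring
  simp_rw [expand]
  rw [sum_comm]
  simp_rw [sum_comm (s := univ) (t := univ) (f := fun a s => χ (a * (_ - s)) * _), ← sum_mul,
    sum_addChar_mul_eq_ite hχ, sub_eq_zero, ite_mul, zero_mul, sum_ite_eq, mem_univ, if_true,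
    mul_sum]

theorem norm_sq_sum_addChar_mul_sq (hχ : χ ≠ 1) (h2 : (2 : F) ≠ 0) {a : F} (ha : a ≠ 0) :
    ‖∑ u, χ (a * u ^ 2)‖ ^ 2 = Fintype.card F := by
  apply Complex.ofReal_injective
  push_cast
  rw [← Complex.mul_conj', map_sum, sum_mul_sum, sum_comm]
  have shift : ∀ v, ∑ u, χ (a * u ^ 2) * conj (χ (a * v ^ 2))
      = ∑ w, χ (a * w ^ 2) * χ (v * (2 * a * w)) := fun v => by
    refine (Fintype.sum_equiv (Equiv.addLeft v) _ _ fun w => ?_).symm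
    rw [← AddChar.map_neg_eq_conj, ← AddChar.map_add_eq_mul, ← AddChar.map_add_eq_mul,
      Equiv.coe_addLeft]
    ring_nf
  simp_rw [shift]
  rw [sum_comm]
  simp_rw [← mul_sum, sum_addChar_mul_eq_ite hχ, mul_ite, mul_zero]
  rw [sum_eq_single 0 (fun w _ hw => if_neg (mul_ne_zero (mul_ne_zero h2 ha) hw))
    (fun h => absurd (mem_univ 0) h)]
  simp

theorem card_pow_mul_addChar_mul_sumSq (hχ : χ ≠ 1) (h2 : (2 : F) ≠ 0) {a : F} (ha : a ≠ 0)
    (w : ι → F) :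
    q ^ Fintype.card ι * χ (a * ∑ i, w i ^ 2)
      = (∑ u, χ (a * u ^ 2)) ^ Fintype.card ι
          * ∑ m, χ (-(w ⬝ᵥ m)) * χ (-(4 * a)⁻¹ * ∑ i, m i ^ 2) := by
  have complete : ∀ m : ι → F, (∑ u, χ (a * u ^ 2)) ^ Fintype.card ι
      * (χ (-(w ⬝ᵥ m)) * χ (-(4 * a)⁻¹ * ∑ i, m i ^ 2))
        = ∑ s, χ (-(w ⬝ᵥ m) + (a * ∑ i, s i ^ 2 + s ⬝ᵥ m)) := fun m => by
    simp_rw [AddChar.map_add_eq_mul χ (-(w ⬝ᵥ m)), ← mul_sum,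
      sum_addChar_mul_sumSq_add_dotProduct h2 ha]
    ring
  have regroup : ∀ s m : ι → F, -(w ⬝ᵥ m) + (a * ∑ i, s i ^ 2 + s ⬝ᵥ m)
      = a * ∑ i, s i ^ 2 + (s - w) ⬝ᵥ m := fun s m => by
    rw [sub_dotProduct]
    ring
  symm
  rw [mul_sum]
  simp_rw [complete]
  rw [sum_comm]
  simp_rw [regroup, AddChar.map_add_eq_mul, ← mul_sum, sum_addChar_dotProduct_eq_ite hχ,
    sub_eq_zero, mul_ite, mul_zero, sum_ite_eq', mem_univ, if_true, mul_comm]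

lemma addCharTransform_card_filter {α : Type*} (s : Finset α) (g : α → F) (a : F) :
    addCharTransform χ (fun t => (#{x ∈ s | g x = t} : ℂ)) a = ∑ x ∈ s, χ (a * g x) := by
  rw [addCharTransform, ← sum_fiberwise s g]
  refine sum_congr rfl fun t _ => ?_
  rw [sum_congr rfl fun x hx => by rw [(mem_filter.1 hx).2], sum_const, nsmul_eq_mul, mul_comm]

variable {κ : Type*} [Fintype κ]

/-- `∑_{v ∈ S_r} ∏_j Ê_j(v)`, without the normalisation `q^{-d}` of each `Ê_j`. -/
def sphereFourierSum (χ : AddChar F ℂ) (E : κ → Finset (ι → F)) (r : F) : ℂ :=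
  ∑ v ∈ univ.filter (fun v : ι → F => ∑ i, v i ^ 2 = r), ∏ j, ∑ y ∈ E j, χ (-(y ⬝ᵥ v))

lemma sum_prod_div_card_pow_eq_sphereFourierSum_div (E : κ → Finset (ι → F)) (r : F) :
    ∑ v ∈ univ.filter (fun v : ι → F => ∑ i, v i ^ 2 = r),
        ∏ j, (∑ y ∈ E j, χ (-(y ⬝ᵥ v))) / q ^ Fintype.card ι
      = sphereFourierSum χ E r / q ^ (Fintype.card ι * Fintype.card κ) := by
  simp only [prod_div_distrib, prod_const, card_univ, ← pow_mul, ← sum_div, sphereFourierSum]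

variable [DecidableEq κ]

/-- The counting function `ν_k(t)`. -/
def sumNormCount (E : κ → Finset (ι → F)) (t : F) : ℕ :=
  #{x ∈ Fintype.piFinset E | ∑ i, (∑ j, x j i) ^ 2 = t}

theorem card_pow_mul_addCharTransform_sumNormCount (hχ : χ ≠ 1) (h2 : (2 : F) ≠ 0) {a : F}
    (ha : a ≠ 0) (E : κ → Finset (ι → F)) :
    q ^ Fintype.card ι * addCharTransform χ (fun t => (sumNormCount E t : ℂ)) a
      = (∑ u, χ (a * u ^ 2)) ^ Fintype.card ι
          * addCharTransform χ (sphereFourierSum χ E) (-(4 * a)⁻¹) := by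
  simp only [sumNormCount]
  rw [addCharTransform_card_filter, mul_sum]
  have invert : ∀ x : κ → ι → F, q ^ Fintype.card ι * χ (a * ∑ i, (∑ j, x j i) ^ 2)
      = (∑ u, χ (a * u ^ 2)) ^ Fintype.card ι
          * ∑ m, χ (-((∑ j, x j) ⬝ᵥ m)) * χ (-(4 * a)⁻¹ * ∑ i, m i ^ 2) := fun x => by
    simpa only [Finset.sum_apply] using card_pow_mul_addChar_mul_sumSq hχ h2 ha (∑ j, x j)
  simp_rw [invert, ← mul_sum]
  congr 1
  rw [sum_comm]
  simp_rw [← sum_mul, AddChar.sum_piFinset_map_neg_sum_dotProduct]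
  rw [addCharTransform, ← sum_fiberwise univ (fun m : ι → F => ∑ i, m i ^ 2)]
  refine sum_congr rfl fun r _ => ?_
  rw [sphereFourierSum, mul_sum]
  exact sum_congr rfl fun m hm => by rw [(mem_filter.1 hm).2, mul_comm]

theorem norm_sq_addCharTransform_sumNormCount (hχ : χ ≠ 1) (h2 : (2 : F) ≠ 0) {a : F}
    (ha : a ≠ 0) (E : κ → Finset (ι → F)) :
    ‖addCharTransform χ (fun t => (sumNormCount E t : ℂ)) a‖ ^ 2
      = ‖addCharTransform χ (sphereFourierSum χ E) (-(4 * a)⁻¹)‖ ^ 2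
          / Fintype.card F ^ Fintype.card ι := by
  have h := congrArg (‖·‖ ^ 2) (card_pow_mul_addCharTransform_sumNormCount hχ h2 ha E)
  have gauss : (‖∑ u, χ (a * u ^ 2)‖ ^ Fintype.card ι) ^ 2 = Fintype.card F ^ Fintype.card ι := by
    rw [← pow_mul, mul_comm, pow_mul, norm_sq_sum_addChar_mul_sq hχ h2 ha]
  simp only [norm_mul, norm_pow, mul_pow, Complex.norm_natCast, gauss] at h
  have hq : (Fintype.card F : ℝ) ^ Fintype.card ι ≠ 0 := by positivity
  rw [eq_div_iff hq]
  apply mul_left_cancel₀ hq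
  linear_combination h

theorem card_mul_sum_sumNormCount_sq_le (hχ : χ ≠ 1) (h2 : (2 : F) ≠ 0)
    (E : κ → Finset (ι → F)) :
    Fintype.card F * ∑ t, (sumNormCount E t : ℝ) ^ 2
      ≤ (∏ j, (#(E j) : ℝ)) ^ 2
          + Fintype.card F * (∑ r, ‖sphereFourierSum χ E r‖ ^ 2)
            / Fintype.card F ^ Fintype.card ι := by
  set ν := addCharTransform χ (fun t => (sumNormCount E t : ℂ))
  set D := addCharTransform χ (sphereFourierSum χ E)
  have parseval : ∑ a, ‖ν a‖ ^ 2 = Fintype.card F * ∑ t, (sumNormCount E t : ℝ) ^ 2 := by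
    rw [sum_norm_sq_addCharTransform hχ]
    simp only [Complex.norm_natCast]
  have at_zero : ν 0 = ∏ j, (#(E j) : ℂ) := by
    simp only [ν, sumNormCount, addCharTransform_card_filter, zero_mul, AddChar.map_zero_eq_one,
      sum_const, Fintype.card_piFinset, nsmul_eq_mul, mul_one, Nat.cast_prod]
  have reindex : ∑ a ∈ univ.erase 0, ‖D (-(4 * a)⁻¹)‖ ^ 2 ≤ ∑ b, ‖D b‖ ^ 2 := by
    have h4 : (4 : F) ≠ 0 := by simpa [show (4 : F) = 2 ^ 2 by norm_num] using pow_ne_zero 2 h2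
    have hφ : Function.Bijective fun a : F => -(4 * a)⁻¹ :=
      Finite.injective_iff_bijective.mp fun a b h => by simpa [h4] using h
    calc _ ≤ ∑ a, ‖D (-(4 * a)⁻¹)‖ ^ 2 :=
          sum_le_sum_of_subset_of_nonneg (subset_univ _) fun _ _ _ => by positivity
      _ = _ := hφ.sum_comp fun b => ‖D b‖ ^ 2
  rw [← parseval, ← add_sum_erase _ _ (mem_univ 0), at_zero,
    sum_congr rfl fun a ha => norm_sq_addCharTransform_sumNormCount hχ h2 (ne_of_mem_erase ha) E,
    ← sum_div, ← sum_norm_sq_addCharTransform hχ, norm_prod]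
  simp only [Complex.norm_natCast]
  gcongr

theorem sum_sumNormCount_sq_le (hχ : χ ≠ 1) (h2 : (2 : F) ≠ 0) (E : κ → Finset (ι → F)) :
    ∑ t, (sumNormCount E t : ℝ) ^ 2
      ≤ (∏ j, (#(E j) : ℝ)) ^ 2 / Fintype.card F
        + (Fintype.card F : ℝ) ^ (2 * Fintype.card ι * Fintype.card κ - Fintype.card ι)
          * ∑ r, ‖sphereFourierSum χ E r / q ^ (Fintype.card ι * Fintype.card κ)‖ ^ 2 := by
  set n := Fintype.card ι
  set N := n * Fintype.card κ
  have hq : (0 : ℝ) < Fintype.card F := by positivity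
  have scale : ((Fintype.card F : ℝ) ^ N) ^ 2 / Fintype.card F ^ n
      ≤ Fintype.card F ^ (2 * n * Fintype.card κ - n) := by
    rw [div_le_iff₀ (by positivity), ← pow_mul, ← pow_add]
    refine pow_le_pow_right₀ (Nat.one_le_cast.mpr Fintype.card_pos) ?_
    rw [show N * 2 = 2 * n * Fintype.card κ by ring]
    exact le_tsub_add
  simp_rw [norm_div, div_pow, norm_pow, Complex.norm_natCast, ← sum_div]
  set X := ∑ r, ‖sphereFourierSum χ E r‖ ^ 2
  calc ∑ t, (sumNormCount E t : ℝ) ^ 2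
      ≤ (∏ j, (#(E j) : ℝ)) ^ 2 / Fintype.card F + X / Fintype.card F ^ n := by
        refine le_of_mul_le_mul_left ((card_mul_sum_sumNormCount_sq_le hχ h2 E).trans_eq ?_) hq
        rw [mul_add, mul_div_cancel₀ _ hq.ne', mul_div_assoc]
    _ = (∏ j, (#(E j) : ℝ)) ^ 2 / Fintype.card F
          + ((Fintype.card F : ℝ) ^ N) ^ 2 / Fintype.card F ^ n
            * (X / ((Fintype.card F : ℝ) ^ N) ^ 2) := by
        field_simp
    _ ≤ _ := by gcongr

end FiniteField

theorem stmt7_general {F : Type*} [Field F] [Fintype F] [DecidableEq F] (hchar : ringChar F ≠ 2)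
    (d k : ℕ)
    (χ : AddChar F ℂ) (hχ : χ ≠ 1)
    (E : Fin k → Finset (Fin d → F)) :
    ∑ t : F,
        (((Finset.univ.filter (fun x : Fin k → Fin d → F =>
            (∀ j, x j ∈ E j) ∧ ∑ i, (∑ j, x j i) ^ 2 = t)).card : ℝ)) ^ 2
      ≤ (∏ j, ((E j).card : ℝ)) ^ 2 / (Fintype.card F : ℝ)
        + (Fintype.card F : ℝ) ^ (2 * d * k - d) *
          ∑ r : F,
            ‖(∑ v ∈ Finset.univ.filter (fun v : Fin d → F => ∑ i, v i ^ 2 = r),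
              ∏ j, (∑ x ∈ E j, χ (-(∑ i, x i * v i))) / (Fintype.card F : ℂ) ^ d)‖ ^ 2 := by
  have count : ∀ t, #{x : Fin k → Fin d → F | (∀ j, x j ∈ E j) ∧ ∑ i, (∑ j, x j i) ^ 2 = t}
      = sumNormCount E t := fun t => by
    rw [sumNormCount]
    congr 1
    ext x
    simp only [mem_filter, mem_univ, true_and, Fintype.mem_piFinset]
  have normalise := sum_prod_div_card_pow_eq_sphereFourierSum_div (χ := χ) E
  simp only [Fintype.card_fin, dotProduct] at normalise
  simp_rw [count, normalise]
  simpa only [Fintype.card_fin] using sum_sumNormCount_sq_le hχ (Ring.two_ne_zero hchar) E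

/-- Claim 3.3 (second moment bound):
`∑_t ν_k(t)² ≤ q^{-1} (∏ |E_j|)² + q^{2dk-d} ∑_r |∑_{v∈S_r} ∏_j Ê_j(v)|²`. -/
theorem stmt7 {F : Type*} [Field F] [Fintype F] [DecidableEq F] (hchar : ringChar F ≠ 2)
    (d k : ℕ) (hd : 2 ≤ d) (hk : 2 ≤ k)
    (χ : AddChar F ℂ) (hχ : χ ≠ 1)
    (E : Fin k → Finset (Fin d → F)) :
    ∑ t : F,
        (((Finset.univ.filter (fun x : Fin k → Fin d → F =>
            (∀ j, x j ∈ E j) ∧ ∑ i, (∑ j, x j i) ^ 2 = t)).card : ℝ)) ^ 2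
      ≤ (∏ j, ((E j).card : ℝ)) ^ 2 / (Fintype.card F : ℝ)
        + (Fintype.card F : ℝ) ^ (2 * d * k - d) *
          ∑ r : F,
            ‖(∑ v ∈ Finset.univ.filter (fun v : Fin d → F => ∑ i, v i ^ 2 = r),
              ∏ j, (∑ x ∈ E j, χ (-(∑ i, x i * v i))) / (Fintype.card F : ℂ) ^ d)‖ ^ 2 :=
  stmt7_general hchar d k χ hχ E
end

section
/- If d ≥ 8 is even and E ⊂ F_q^d with |E| ≥ q^{(d−1)/2}, then for all t ∈ F_q^*, ‖Ẽ‖_{L^3(S_t,dσ)} ≲ q^{(−3d^2+23d−20)/(36d−96)} |E|^{(15d−46)/(18d−48)}, assuming the estimates ‖Ẽ‖_{L^{2,∞}(S_t,dσ)} ≲ q^{−(d−1)/4}|E| and ‖Ẽ‖_{L^{(12d−8)/(3d+4),∞}(S_t,dσ)} ≲ |E|^{3/4}. -/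
/-!
Real (Marcinkiewicz) interpolation on the normalized counting measure of `S_t`. Write the cube sum
by the layer-cake formula `∑ f ^ r = ∫₀^∞ r s^(r-1) #{f > s} ds`, bound the distribution function
by the weak `L²` estimate below a threshold `M` and by the weak `L^p` estimate above it, where
`p = (12d - 8)/(3d + 4) > 3`, and choose `M` to balance the two pieces. This gives
`‖Ẽ‖_{L³} ≲ A^(1-θ) B^θ` with `θ = p/(3(p-2)) = (6d - 4)/(9d - 24)`.
-/

open Finset
open MeasureTheory Set

lemma rpow_eq_integral_indicator_Iio {a r : ℝ} (ha : 0 ≤ a) (hr : 0 < r) :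
    a ^ r = ∫ s in Ioi 0, (Iio a).indicator (fun s => r * s ^ (r - 1)) s := by
  rw [setIntegral_indicator measurableSet_Iio, Ioi_inter_Iio, ← integral_Ioc_eq_integral_Ioo,
    ← intervalIntegral.integral_of_le ha, intervalIntegral.integral_const_mul,
    integral_rpow (Or.inl (by linarith)), sub_add_cancel, Real.zero_rpow hr.ne', sub_zero]
  field_simp

lemma integrableOn_indicator_Iio_rpow {a r : ℝ} (hr : 0 < r) :
    IntegrableOn ((Iio a).indicator fun s => r * s ^ (r - 1)) (Ioi 0) := by
  rw [IntegrableOn, integrable_indicator_iff measurableSet_Iio, IntegrableOn,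
    Measure.restrict_restrict measurableSet_Iio, Iio_inter_Ioi]
  rcases le_or_gt a 0 with ha | ha
  · simp [Ioo_eq_empty_of_le ha]
  exact ((intervalIntegral.intervalIntegrable_rpow' (a := 0) (b := a)
    (by linarith : -1 < r - 1)).const_mul r).1.mono_set Ioo_subset_Ioc_self

lemma mul_div_rpow_eq {a b : ℝ} (ha : 0 < a) (hb : 0 < b) (t : ℝ) :
    a * (b / a) ^ t = a ^ (1 - t) * b ^ t := by
  rw [Real.div_rpow hb.le ha.le, Real.rpow_sub ha, Real.rpow_one]
  ring

lemma le_mul_rpow_mul_rpow_neg_of_mul_rpow_le {c n s A p : ℝ} (hc : 0 ≤ c) (hn : 0 < n)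
    (hs : 0 < s) (hp : 0 < p) (h : s * (c / n) ^ (1 / p) ≤ A) :
    c ≤ n * A ^ p * s ^ (-p) := by
  have hcn : 0 ≤ c / n := by positivity
  have hA : 0 ≤ A := le_trans (by positivity) h
  have h' : (c / n) ^ (1 / p) ≤ A / s := by rw [le_div_iff₀ hs]; linarith
  have := Real.rpow_le_rpow (by positivity) h' hp.le
  rw [← Real.rpow_mul hcn, one_div_mul_cancel hp.ne', Real.rpow_one, div_le_iff₀ hn,
    Real.div_rpow hA hs.le, div_eq_mul_inv, ← Real.rpow_neg hs.le] at this
  linarith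

section DistributionFunction

variable {X : Type*} (S : Finset X) (f : X → ℝ)

lemma mul_card_lt_eq_sum_indicator (r s : ℝ) :
    r * s ^ (r - 1) * #{x ∈ S | s < f x}
      = ∑ x ∈ S, (Iio (f x)).indicator (fun s => r * s ^ (r - 1)) s := by
  rw [card_filter, Nat.cast_sum, mul_sum]
  refine sum_congr rfl fun x _ => ?_
  by_cases h : s < f x <;> simp [h]

lemma integrableOn_mul_card_lt {r : ℝ} (hr : 0 < r) :
    IntegrableOn (fun s => r * s ^ (r - 1) * #{x ∈ S | s < f x}) (Ioi 0) := by
  simp_rw [mul_card_lt_eq_sum_indicator]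
  exact integrable_finsetSum S fun x _ => integrableOn_indicator_Iio_rpow hr

lemma sum_rpow_eq_integral_card_lt (hf : ∀ x ∈ S, 0 ≤ f x) {r : ℝ} (hr : 0 < r) :
    ∑ x ∈ S, f x ^ r = ∫ s in Ioi 0, r * s ^ (r - 1) * #{x ∈ S | s < f x} := by
  simp_rw [mul_card_lt_eq_sum_indicator]
  rw [integral_finsetSum S fun x _ => integrableOn_indicator_Iio_rpow hr]
  exact sum_congr rfl fun x hx => rpow_eq_integral_indicator_Iio (hf x hx) hr

lemma sum_rpow_le_add_of_card_lt_le (hf : ∀ x ∈ S, 0 ≤ f x)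
    {p₀ r p₁ c₀ c₁ M : ℝ} (hr : 0 < r) (hp₀ : p₀ < r) (hp₁ : r < p₁) (hM : 0 < M)
    (h₀ : ∀ s, 0 < s → (#{x ∈ S | s < f x} : ℝ) ≤ c₀ * s ^ (-p₀))
    (h₁ : ∀ s, 0 < s → (#{x ∈ S | s < f x} : ℝ) ≤ c₁ * s ^ (-p₁)) :
    ∑ x ∈ S, f x ^ r ≤ r / (r - p₀) * c₀ * M ^ (r - p₀) + r / (p₁ - r) * c₁ * M ^ (r - p₁) := by
  set g : ℝ → ℝ := fun s => r * s ^ (r - 1) * #{x ∈ S | s < f x}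
  have hg : IntegrableOn g (Ioi 0) := integrableOn_mul_card_lt S f hr
  have bound : ∀ {c p s : ℝ}, 0 < s → (#{x ∈ S | s < f x} : ℝ) ≤ c * s ^ (-p) →
      g s ≤ r * c * s ^ (r - p - 1) := by
    intro c p s hs h
    calc g s ≤ r * s ^ (r - 1) * (c * s ^ (-p)) := by
          simp only [g]; gcongr
      _ = r * c * s ^ (r - p - 1) := by
        rw [show r - p - 1 = r - 1 + -p by ring, Real.rpow_add hs]; ring
  have low : ∫ s in Ioc 0 M, g s ≤ r / (r - p₀) * c₀ * M ^ (r - p₀) := by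
    calc ∫ s in Ioc 0 M, g s ≤ ∫ s in Ioc 0 M, r * c₀ * s ^ (r - p₀ - 1) := by
          refine setIntegral_mono_on (hg.mono_set Ioc_subset_Ioi_self) ?_ measurableSet_Ioc
            fun s hs => bound hs.1 (h₀ s hs.1)
          exact (intervalIntegral.intervalIntegrable_rpow' (a := 0) (b := M)
            (by linarith : -1 < r - p₀ - 1)).1.const_mul _
      _ = r / (r - p₀) * c₀ * M ^ (r - p₀) := by
          rw [← intervalIntegral.integral_of_le hM.le, intervalIntegral.integral_const_mul,
            integral_rpow (Or.inl (by linarith)), sub_add_cancel, Real.zero_rpow (by linarith),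
            sub_zero]
          field_simp
  have high : ∫ s in Ioi M, g s ≤ r / (p₁ - r) * c₁ * M ^ (r - p₁) := by
    calc ∫ s in Ioi M, g s ≤ ∫ s in Ioi M, r * c₁ * s ^ (r - p₁ - 1) := by
          refine setIntegral_mono_on (hg.mono_set (Ioi_subset_Ioi hM.le))
            ((integrableOn_Ioi_rpow_of_lt (by linarith) hM).const_mul _) measurableSet_Ioi
            fun s hs => bound (hM.trans hs) (h₁ s (hM.trans hs))
      _ = r / (p₁ - r) * c₁ * M ^ (r - p₁) := by
          rw [integral_const_mul, integral_Ioi_rpow_of_lt (by linarith) hM, sub_add_cancel]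
          rw [← neg_sub p₁ r, neg_div_neg_eq]
          ring
  rw [sum_rpow_eq_integral_card_lt S f hf hr, ← Ioc_union_Ioi_eq_Ioi hM.le,
    setIntegral_union (Ioc_disjoint_Ioi le_rfl) measurableSet_Ioi
      (hg.mono_set Ioc_subset_Ioi_self) (hg.mono_set (Ioi_subset_Ioi hM.le))]
  exact add_le_add low high

lemma sum_rpow_le_of_card_lt_le (hf : ∀ x ∈ S, 0 ≤ f x)
    {p₀ r p₁ c₀ c₁ : ℝ} (hr : 0 < r) (hp₀ : p₀ < r) (hp₁ : r < p₁) (hc₀ : 0 < c₀) (hc₁ : 0 < c₁)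
    (h₀ : ∀ s, 0 < s → (#{x ∈ S | s < f x} : ℝ) ≤ c₀ * s ^ (-p₀))
    (h₁ : ∀ s, 0 < s → (#{x ∈ S | s < f x} : ℝ) ≤ c₁ * s ^ (-p₁)) :
    ∑ x ∈ S, f x ^ r ≤
      (r / (r - p₀) + r / (p₁ - r)) * c₀ ^ ((p₁ - r) / (p₁ - p₀)) * c₁ ^ ((r - p₀) / (p₁ - p₀)) := by
  have hp : p₁ - p₀ ≠ 0 := by linarith
  set M := (c₁ / c₀) ^ (1 / (p₁ - p₀))
  have hM : 0 < M := by positivity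
  have e₀ : c₀ * M ^ (r - p₀) = c₀ ^ ((p₁ - r) / (p₁ - p₀)) * c₁ ^ ((r - p₀) / (p₁ - p₀)) := by
    rw [← Real.rpow_mul (by positivity), mul_div_rpow_eq hc₀ hc₁]
    congr 2
    · field_simp; ring
    · field_simp
  have e₁ : c₁ * M ^ (r - p₁) = c₀ ^ ((p₁ - r) / (p₁ - p₀)) * c₁ ^ ((r - p₀) / (p₁ - p₀)) := by
    rw [← Real.rpow_mul (by positivity), ← inv_div, Real.inv_rpow (by positivity),
      ← Real.rpow_neg (by positivity), mul_div_rpow_eq hc₁ hc₀, mul_comm]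
    congr 2 <;> field_simp <;> ring
  calc ∑ x ∈ S, f x ^ r
      ≤ r / (r - p₀) * c₀ * M ^ (r - p₀) + r / (p₁ - r) * c₁ * M ^ (r - p₁) :=
        sum_rpow_le_add_of_card_lt_le S f hf hr hp₀ hp₁ hM h₀ h₁
    _ = _ := by rw [mul_assoc, e₀, mul_assoc, e₁]; ring

theorem rpow_avg_le_of_weakType (hf : ∀ x ∈ S, 0 ≤ f x)
    {p₀ r p₁ A B θ : ℝ} (hp₀ : 0 < p₀) (hp₀r : p₀ < r) (hrp₁ : r < p₁) (hA : 0 < A) (hB : 0 < B)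
    (hθ : θ = p₁ * (r - p₀) / (r * (p₁ - p₀)))
    (h₀ : ∀ s, 0 < s → s * ((#{x ∈ S | s < f x} : ℝ) / #S) ^ (1 / p₀) ≤ A)
    (h₁ : ∀ s, 0 < s → s * ((#{x ∈ S | s < f x} : ℝ) / #S) ^ (1 / p₁) ≤ B) :
    ((∑ x ∈ S, f x ^ r) / #S) ^ (1 / r) ≤
      (r / (r - p₀) + r / (p₁ - r)) ^ (1 / r) * A ^ (1 - θ) * B ^ θ := by
  have hr : 0 < r := hp₀.trans hp₀r
  rcases S.eq_empty_or_nonempty with rfl | hS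
  · rw [sum_empty, zero_div, Real.zero_rpow (by positivity)]
    have : 0 < p₁ - r := by linarith
    positivity
  have hn : (0 : ℝ) < #S := by exact_mod_cast hS.card_pos
  set K := r / (r - p₀) + r / (p₁ - r)
  have hK : 0 < K := by
    have : 0 < r - p₀ := by linarith
    have : 0 < p₁ - r := by linarith
    positivity
  have hsum := sum_rpow_le_of_card_lt_le S f hf hr hp₀r hrp₁ (c₀ := #S * A ^ p₀)
    (c₁ := #S * B ^ p₁) (by positivity) (by positivity)
    (fun s hs => le_mul_rpow_mul_rpow_neg_of_mul_rpow_le (by positivity) hn hs hp₀ (h₀ s hs))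
    (fun s hs => le_mul_rpow_mul_rpow_neg_of_mul_rpow_le (by positivity) hn hs (by linarith) (h₁ s hs))
  have hsplit : (#S * A ^ p₀) ^ ((p₁ - r) / (p₁ - p₀)) * (#S * B ^ p₁) ^ ((r - p₀) / (p₁ - p₀))
      = #S * (A ^ (r * (1 - θ)) * B ^ (r * θ)) := by
    have hp : p₁ - p₀ ≠ 0 := by linarith
    rw [Real.mul_rpow hn.le (by positivity), Real.mul_rpow hn.le (by positivity),
      ← Real.rpow_mul hA.le, ← Real.rpow_mul hB.le]
    calc _ = #S ^ ((p₁ - r) / (p₁ - p₀) + (r - p₀) / (p₁ - p₀)) *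
          (A ^ (p₀ * ((p₁ - r) / (p₁ - p₀))) * B ^ (p₁ * ((r - p₀) / (p₁ - p₀)))) := by
          rw [Real.rpow_add hn]; ring
      _ = _ := by
          congr 1
          · rw [← add_div, show p₁ - r + (r - p₀) = p₁ - p₀ by ring, div_self hp, Real.rpow_one]
          congr 2 <;> rw [hθ]
          · field_simp; ring
          · field_simp
  calc ((∑ x ∈ S, f x ^ r) / #S) ^ (1 / r)
      ≤ (K * (A ^ (r * (1 - θ)) * B ^ (r * θ))) ^ (1 / r) := by
        gcongr
        · exact div_nonneg (sum_nonneg fun x hx => Real.rpow_nonneg (hf x hx) r) hn.le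
        rw [div_le_iff₀ hn]
        rw [mul_assoc, hsplit] at hsum
        linarith
    _ = K ^ (1 / r) * A ^ (1 - θ) * B ^ θ := by
        rw [Real.mul_rpow hK.le (by positivity), Real.mul_rpow (by positivity) (by positivity),
          ← Real.rpow_mul hA.le, ← Real.rpow_mul hB.le, mul_assoc]
        field_simp

end DistributionFunction

theorem stmt16_general (d : ℕ) (hd : 8 ≤ d)
    (C₀ C₁ : ℝ) (hC₀ : 0 < C₀) (hC₁ : 0 < C₁) :
    ∃ C : ℝ, 0 < C ∧
      ∀ (F : Type) [Field F] [Fintype F] [DecidableEq F],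
        ringChar F ≠ 2 →
        ∀ (χ : AddChar F ℂ), χ ≠ 1 →
        ∀ (E : Finset (Fin d → F)) (t : F), t ≠ 0 →
          (Fintype.card F : ℝ) ^ (((d : ℝ) - 1) / 2) ≤ (E.card : ℝ) →
        ∀ S : Finset (Fin d → F),
          S = Finset.univ.filter (fun x : Fin d → F => ∑ i, x i ^ 2 = t) →
          (∀ s : ℝ, 0 < s →
            s * (((S.filter (fun x =>
                s < ‖∑ m ∈ E, χ (-(∑ i, x i * m i))‖)).card : ℝ) /
                  (S.card : ℝ)) ^ ((1 : ℝ) / 2)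
              ≤ C₀ * (Fintype.card F : ℝ) ^ (-((d : ℝ) - 1) / 4) * (E.card : ℝ)) →
          (∀ s : ℝ, 0 < s →
            s * (((S.filter (fun x =>
                s < ‖∑ m ∈ E, χ (-(∑ i, x i * m i))‖)).card : ℝ) /
                  (S.card : ℝ)) ^ (((3 : ℝ) * d + 4) / (12 * (d : ℝ) - 8))
              ≤ C₁ * ((E.card : ℝ)) ^ ((3 : ℝ) / 4)) →
          ((∑ x ∈ S, ‖∑ m ∈ E, χ (-(∑ i, x i * m i))‖ ^ 3) /
              (S.card : ℝ)) ^ ((1 : ℝ) / 3)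
            ≤ C * (Fintype.card F : ℝ) ^
                ((-3 * (d : ℝ) ^ 2 + 23 * (d : ℝ) - 20) / (36 * (d : ℝ) - 96)) *
              ((E.card : ℝ)) ^ ((15 * (d : ℝ) - 46) / (18 * (d : ℝ) - 48)) := by
  have hd' : (8 : ℝ) ≤ d := by exact_mod_cast hd
  set p : ℝ := (12 * d - 8) / (3 * d + 4) with hp_def
  set θ : ℝ := (6 * d - 4) / (9 * d - 24) with hθ_def
  have hp_mul : p * (3 * d + 4) = 12 * d - 8 := div_mul_cancel₀ _ (by linarith)
  have hθ_mul : θ * (9 * d - 24) = 6 * d - 4 := div_mul_cancel₀ _ (by linarith)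
  have hp : 3 < p := by rw [hp_def, lt_div_iff₀ (by linarith)]; linarith
  have hθ : θ = p * (3 - 2) / (3 * (p - 2)) := by
    rw [hθ_def, div_eq_div_iff (by linarith) (by linarith)]
    linear_combination 3 * hp_mul
  have hq_exp : -((d : ℝ) - 1) / 4 * (1 - θ) = (-3 * d ^ 2 + 23 * d - 20) / (36 * d - 96) := by
    rw [eq_div_iff (by linarith)]
    linear_combination (d - 1 : ℝ) * hθ_mul
  have hE_exp : 1 - θ + 3 / 4 * θ = (15 * (d : ℝ) - 46) / (18 * d - 48) := by
    rw [eq_div_iff (by linarith)]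
    linear_combination (-1 / 2 : ℝ) * hθ_mul
  have hpK : 0 < 3 / (3 - 2) + 3 / (p - 3) := by
    have : 0 < p - 3 := by linarith
    positivity
  refine ⟨(3 / (3 - 2) + 3 / (p - 3)) ^ (1 / 3 : ℝ) * C₀ ^ (1 - θ) * C₁ ^ θ, by positivity, ?_⟩
  intro F _ _ _ _ χ _ E t _ hE S _ h₀ h₁
  have hq : 0 < (Fintype.card F : ℝ) := by exact_mod_cast Fintype.card_pos
  have hE : 0 < (E.card : ℝ) := lt_of_lt_of_le (by positivity) hE
  have key := rpow_avg_le_of_weakType S (fun x => ‖∑ m ∈ E, χ (-(∑ i, x i * m i))‖)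
    (A := C₀ * (Fintype.card F : ℝ) ^ (-((d : ℝ) - 1) / 4) * E.card)
    (B := C₁ * (E.card : ℝ) ^ ((3 : ℝ) / 4))
    (fun _ _ => norm_nonneg _) two_pos (by norm_num) hp (by positivity) (by positivity) hθ h₀
    (by simpa only [p, one_div_div] using h₁)
  simp only [Real.rpow_ofNat] at key
  refine key.trans_eq ?_
  rw [Real.mul_rpow (by positivity) hE.le, Real.mul_rpow hC₀.le (by positivity),
    Real.mul_rpow hC₁.le (by positivity), ← Real.rpow_mul hq.le, ← Real.rpow_mul hE.le, hq_exp,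
    ← hE_exp, Real.rpow_add hE]
  ring

/-- Lemma 6.3: for even `d ≥ 8` and `|E| ≥ q^{(d-1)/2}`, assuming the weak-type estimates
`‖Ẽ‖_{L^{2,∞}(S_t,dσ)} ≲ q^{-(d-1)/4}|E|` and `‖Ẽ‖_{L^{(12d-8)/(3d+4),∞}(S_t,dσ)} ≲ |E|^{3/4}`,
one has `‖Ẽ‖_{L^3(S_t,dσ)} ≲ q^{(-3d²+23d-20)/(36d-96)} |E|^{(15d-46)/(18d-48)}` for `t ≠ 0`. -/
theorem stmt16 (d : ℕ) (hd : 8 ≤ d) (hde : Even d)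
    (C₀ C₁ : ℝ) (hC₀ : 0 < C₀) (hC₁ : 0 < C₁) :
    ∃ C : ℝ, 0 < C ∧
      ∀ (F : Type) [Field F] [Fintype F] [DecidableEq F],
        ringChar F ≠ 2 →
        ∀ (χ : AddChar F ℂ), χ ≠ 1 →
        ∀ (E : Finset (Fin d → F)) (t : F), t ≠ 0 →
          (Fintype.card F : ℝ) ^ (((d : ℝ) - 1) / 2) ≤ (E.card : ℝ) →
        ∀ S : Finset (Fin d → F),
          S = Finset.univ.filter (fun x : Fin d → F => ∑ i, x i ^ 2 = t) →
          (∀ s : ℝ, 0 < s →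
            s * (((S.filter (fun x =>
                s < ‖∑ m ∈ E, χ (-(∑ i, x i * m i))‖)).card : ℝ) /
                  (S.card : ℝ)) ^ ((1 : ℝ) / 2)
              ≤ C₀ * (Fintype.card F : ℝ) ^ (-((d : ℝ) - 1) / 4) * (E.card : ℝ)) →
          (∀ s : ℝ, 0 < s →
            s * (((S.filter (fun x =>
                s < ‖∑ m ∈ E, χ (-(∑ i, x i * m i))‖)).card : ℝ) /
                  (S.card : ℝ)) ^ (((3 : ℝ) * d + 4) / (12 * (d : ℝ) - 8))
              ≤ C₁ * ((E.card : ℝ)) ^ ((3 : ℝ) / 4)) →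
          ((∑ x ∈ S, ‖∑ m ∈ E, χ (-(∑ i, x i * m i))‖ ^ 3) /
              (S.card : ℝ)) ^ ((1 : ℝ) / 3)
            ≤ C * (Fintype.card F : ℝ) ^
                ((-3 * (d : ℝ) ^ 2 + 23 * (d : ℝ) - 20) / (36 * (d : ℝ) - 96)) *
              ((E.card : ℝ)) ^ ((15 * (d : ℝ) - 46) / (18 * (d : ℝ) - 48)) :=
  stmt16_general d hd C₀ C₁ hC₀ hC₁
end
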